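/- Let L and L̃ be filtered SLie∞-algebras, n ≥ 1, and U : L → L̃ an ∞-morphism compatible with the filtrations whose linear term φ induces a quasi-isomorphism F_nL/F_{n+1}L → F_nL̃/F_{n+1}L̃. Let α and α' be MC elements of L with α' − α ∈ F_nL, and suppose there exists a rectified 1-cell β̃ = β̃_0(t_0) + dt_0 β̃_1 in MC_•(L̃) with β̃_1 ∈ (F_nL̃)^{−1}, β̃_0(0) = U_*(α) and β̃_0(1) = U_*(α'). Then there exist ρ_1 ∈ (F_nL)^{−1} and γ̃ ∈ (F_nL̃)^{−2} such that α' − α − ∂ρ_1 ∈ F_{n+1}L and β̃_1 − φ(ρ_1) − ∂γ̃ ∈ F_{n+1}L̃. -/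

import Mathlib

/-!
# Filtered shifted L∞-algebras (core framework)

We work over a field `k` of characteristic zero.  A *shifted* L∞-algebra
(`SLie∞`-algebra) is modelled as an internally ℤ-graded `k`-module `L`
(`deg : ℤ → Submodule k L`, internal direct sum) with a degree `+1`
differential `diff`, and symmetric degree `+1` multibrackets
`br m : L^m → L` (`m ≥ 2`, extended by `0` for `m < 2`) which are graded
symmetric with Koszul signs and satisfy the generalized Jacobi relations.
A *filtered* `SLie∞`-algebra in addition carries a complete descending
filtration `F : ℕ → Submodule k L` (with `F 0 = F 1 = ⊤`) by subcomplexes,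
compatible with the brackets.

Infinite sums (curvature, twists, pushforwards of Maurer-Cartan elements, ...)
are expressed relationally via `IsLim`: `IsLim a x` says that the sequence of
partial sums `a` converges to `x` in the topology determined by the filtration.
-/

open Finset

noncomputable section

/-- The Koszul sign `ε(σ; v₁, …, v_m)` of a permutation `σ` acting on homogeneous
elements of degrees `d i`: the product of `(-1)^(d i * d j)` over all
inversions `(i, j)` of `σ`. -/
def koszulSign {m : ℕ} (d : Fin m → ℤ) (σ : Equiv.Perm (Fin m)) : ℤˣ :=
  ∏ p ∈ Finset.univ.filter (fun p : Fin m × Fin m => p.1 < p.2 ∧ σ p.2 < σ p.1),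
    (-1 : ℤˣ) ^ (d p.1 * d p.2)

theorem card_le_of_fin {m : ℕ} (S : Finset (Fin m)) : S.card ≤ m := by
  simpa using S.card_le_univ

/-- The `(S.card, m - S.card)`-shuffle permutation determined by a subset
`S ⊆ {0, …, m-1}`: it enumerates the elements of `S` (in increasing order) first
and then the elements of the complement of `S` (in increasing order). -/
def moveFrontPerm {m : ℕ} (S : Finset (Fin m)) : Equiv.Perm (Fin m) :=
  Tuple.sort (fun i => (toLex ((if i ∈ S then (0 : Fin 2) else 1), i) : Fin 2 ×ₗ Fin m))

/-- The index of the `j`-th element of the front block. -/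
def frontIdx {m : ℕ} (S : Finset (Fin m)) (j : Fin S.card) : Fin m :=
  ⟨j, lt_of_lt_of_le j.isLt (card_le_of_fin S)⟩

/-- The index of the `j`-th element of the back block. -/
def backIdx {m : ℕ} (S : Finset (Fin m)) (j : Fin (m - S.card)) : Fin m :=
  ⟨S.card + j, by have h1 := card_le_of_fin S; have h2 := j.isLt; omega⟩

variable (k : Type) [Field k] [CharZero k]

/-- A filtered shifted L∞-algebra (`SLie∞`-algebra) over `k`. -/
structure FilteredSLie where
  /-- underlying `k`-module -/
  L : Type
  [addgrp : AddCommGroup L]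
  [mod : Module k L]
  /-- internal ℤ-grading -/
  deg : ℤ → Submodule k L
  internal : DirectSum.IsInternal deg
  /-- the differential `∂` -/
  diff : L →ₗ[k] L
  diff_sq : ∀ x, diff (diff x) = 0
  diff_deg : ∀ (d : ℤ) (x), x ∈ deg d → diff x ∈ deg (d + 1)
  /-- degree `1` symmetric multibrackets `{·, …, ·}_m`; by convention `br m = 0` for `m < 2`. -/
  br : ∀ m : ℕ, MultilinearMap k (fun _ : Fin m => L) L
  br_low : ∀ m, m < 2 → br m = 0
  br_deg : ∀ (m : ℕ) (d : Fin m → ℤ) (v : Fin m → L), (∀ i, v i ∈ deg (d i)) →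
      br m v ∈ deg (1 + ∑ i, d i)
  br_symm : ∀ (m : ℕ) (d : Fin m → ℤ) (v : Fin m → L), (∀ i, v i ∈ deg (d i)) →
      ∀ σ : Equiv.Perm (Fin m), br m (v ∘ σ) = ((koszulSign d σ : ℤˣ) : ℤ) • br m v
  /-- the generalized Jacobi relations of a shifted L∞-algebra; the sum over
  `(p, m-p)`-shuffles is written as a sum over subsets `S` of cardinality `p`. -/
  jacobi : ∀ (m : ℕ), 2 ≤ m → ∀ (d : Fin m → ℤ) (v : Fin m → L), (∀ i, v i ∈ deg (d i)) →
      diff (br m v)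
        + ∑ i : Fin m,
            (((-1 : ℤˣ) ^ (∑ j ∈ Finset.univ.filter (fun j => j < i), d j) : ℤˣ) : ℤ) •
              br m (Function.update v i (diff (v i)))
        + ∑ S ∈ Finset.univ.filter (fun S : Finset (Fin m) => 2 ≤ S.card ∧ S.card ≤ m - 1),
            ((koszulSign d (moveFrontPerm S) : ℤˣ) : ℤ) •
              br (m - S.card + 1)
                (Fin.cons (br S.card fun j => v (moveFrontPerm S (frontIdx S j)))
                  (fun j => v (moveFrontPerm S (backIdx S j))))
        = 0
  /-- complete descending filtration `L = F 1 ⊇ F 2 ⊇ ⋯` (we also set `F 0 = ⊤`). -/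
  F : ℕ → Submodule k L
  F_zero : F 0 = ⊤
  F_one : F 1 = ⊤
  F_anti : ∀ {a b : ℕ}, a ≤ b → F b ≤ F a
  F_diff : ∀ (n : ℕ) (x), x ∈ F n → diff x ∈ F n
  F_graded : ∀ n : ℕ, F n = ⨆ d : ℤ, (F n ⊓ deg d)
  F_br : ∀ (m : ℕ) (ι : Fin m → ℕ) (v : Fin m → L), (∀ i, v i ∈ F (ι i)) →
      br m v ∈ F (∑ i, ι i)
  /-- the filtration is separated … -/
  sep : ∀ x : L, (∀ n, x ∈ F n) → x = 0
  /-- … and complete: `L = lim L / F n`. -/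
  complete : ∀ a : ℕ → L, (∀ n, a (n + 1) - a n ∈ F (n + 1)) →
      ∃ x, ∀ n, x - a n ∈ F (n + 1)

attribute [instance] FilteredSLie.addgrp FilteredSLie.mod

namespace FilteredSLie

variable {k}
variable (A : FilteredSLie k)

/-- `A.IsLim a x`: the sequence `a` converges to `x` in the filtration topology. -/
def IsLim (a : ℕ → A.L) (x : A.L) : Prop :=
  ∀ n : ℕ, ∃ N : ℕ, ∀ m ≥ N, x - a m ∈ A.F n

/-- Partial sums of the curvature `curv α = ∂α + Σ_{m ≥ 2} (1/m!) {α, …, α}_m`. -/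
def curvPartial (α : A.L) (M : ℕ) : A.L :=
  A.diff α + ∑ m ∈ Finset.range (M + 1), ((m.factorial : k)⁻¹) • A.br m (fun _ => α)

/-- `A.IsCurv α c` : `c = curv α`. -/
def IsCurv (α : A.L) (c : A.L) : Prop := A.IsLim (A.curvPartial α) c

/-- `α` is a Maurer-Cartan element: `α` has degree `0` and `curv α = 0`. -/
def IsMC (α : A.L) : Prop := α ∈ A.deg 0 ∧ A.IsCurv α 0

/-- Partial sums of the twisted differential
`∂^α v = ∂v + Σ_{m ≥ 1} (1/m!) {α, …, α, v}_{m+1}`. -/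
def twistDiffPartial (α v : A.L) (M : ℕ) : A.L :=
  A.diff v + ∑ m ∈ Finset.range (M + 1),
    ((m.factorial : k)⁻¹) • A.br (m + 1) (Fin.snoc (fun _ : Fin m => α) v)

/-- `A.IsTwistDiff α v w` : `w = ∂^α v`. -/
def IsTwistDiff (α v w : A.L) : Prop := A.IsLim (A.twistDiffPartial α v) w

/-! ### Coefficientwise operations on `L ⊗̂ k[t]`

An element of `L ⊗̂ k[t]` (power series whose coefficients tend to `0` in the
filtration topology) is modelled by its coefficient sequence `ℕ → L`. -/

/-- The `j`-th coefficient of the bracket of power series (Cauchy product). -/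
def coeffBr (m : ℕ) (c : Fin m → (ℕ → A.L)) (j : ℕ) : A.L :=
  ∑ f ∈ Finset.univ.filter (fun f : Fin m → Fin (j + 1) => ∑ i, ((f i : ℕ)) = j),
    A.br m (fun i => c i (f i))

/-- Partial sums of the `j`-th coefficient of `curv (β₀(t))`. -/
def coeffCurvPartial (b0 : ℕ → A.L) (j M : ℕ) : A.L :=
  A.diff (b0 j) +
    ∑ m ∈ Finset.range (M + 1), ((m.factorial : k)⁻¹) • A.coeffBr m (fun _ => b0) j

/-- Partial sums of the `j`-th coefficient of `∂^{β₀(t)} β₁(t)`. -/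
def coeffFlowPartial (b0 b1 : ℕ → A.L) (j M : ℕ) : A.L :=
  A.diff (b1 j) + ∑ m ∈ Finset.range (M + 1),
    ((m.factorial : k)⁻¹) •
      A.coeffBr (m + 1) (fun i : Fin (m + 1) => if (i : ℕ) < m then b0 else b1) j

/-- `A.IsEval1 b x` : the power series with coefficients `b` evaluates to `x` at `t = 1`. -/
def IsEval1 (b : ℕ → A.L) (x : A.L) : Prop :=
  A.IsLim (fun M => ∑ j ∈ Finset.range (M + 1), b j) x

end FilteredSLie

/-- A `1`-cell `β = β₀(t₀) + dt₀ β₁(t₀)` in the Deligne–Getzler–Hinich ∞-groupoid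
`MC_•(A)`, i.e. a Maurer–Cartan element of `A ⊗̂ Ω₁`: written in terms of the
coefficient sequences `b0` of `β₀` and `b1` of `β₁`.  The Maurer–Cartan equation
is equivalent to `curv (β₀(t₀)) = 0` (`mc`) together with
`(d/dt₀) β₀(t₀) = ∂^{β₀(t₀)} β₁(t₀)` (`flow`). -/
structure OneCell {k : Type} [Field k] [CharZero k] (A : FilteredSLie k) where
  b0 : ℕ → A.L
  b1 : ℕ → A.L
  b0_deg : ∀ j, b0 j ∈ A.deg 0
  b1_deg : ∀ j, b1 j ∈ A.deg (-1)
  b0_decay : ∀ n : ℕ, ∃ N, ∀ j ≥ N, b0 j ∈ A.F n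
  b1_decay : ∀ n : ℕ, ∃ N, ∀ j ≥ N, b1 j ∈ A.F n
  mc : ∀ j, A.IsLim (A.coeffCurvPartial b0 j) 0
  flow : ∀ j, A.IsLim (A.coeffFlowPartial b0 b1 j) ((j + 1) • b0 (j + 1))

namespace OneCell

variable {k : Type} [Field k] [CharZero k] {A : FilteredSLie k}

/-- A `1`-cell is *rectified* if `β₁` is constant in `t₀`. -/
def Rectified (c : OneCell A) : Prop := ∀ j, 1 ≤ j → c.b1 j = 0

/-- A `1`-cell connects `β₀(0)` to `β₀(1)`. -/
def Connects (c : OneCell A) (x y : A.L) : Prop :=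
  c.b0 0 = x ∧ A.IsEval1 c.b0 y

end OneCell

/-- `Q'_p`: the corestriction of the codifferential encoding the `SLie∞`-structure:
`Q'_1 = ∂` and `Q'_p = {·, …, ·}_p` for `p ≠ 1`. -/
def FilteredSLie.Qarg {k : Type} [Field k] [CharZero k]
    (A : FilteredSLie k) (p : ℕ) (w : Fin p → A.L) : A.L :=
  if h : p = 1 then A.diff (w ⟨0, by omega⟩) else A.br p w

/-- The permutation of `{0, …, m-1}` sorting the indices into the consecutive blocks
determined by `π : Fin m → Fin p` (each block listed in increasing order). -/
def sortByBlocks {m p : ℕ} (π : Fin m → Fin p) : Equiv.Perm (Fin m) :=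
  Tuple.sort (fun i => (toLex (π i, i) : Fin p ×ₗ Fin m))

/-- The block of a partition `π : Fin m → Fin p` over `i : Fin p`. -/
def blockFiber {m p : ℕ} (π : Fin m → Fin p) (i : Fin p) : Finset (Fin m) :=
  Finset.univ.filter (fun a => π a = i)


/-- An `∞`-morphism `U : A → B` of filtered `SLie∞`-algebras, compatible with the
filtrations.  It is recorded via its corestriction: the family of graded symmetric
degree-`0` multilinear maps `U' m : A^m → B` (`m ≥ 1`).  The field `compat` is the
componentwise form of the equation `U ∘ Q = Q̃ ∘ U` of coalgebra homomorphisms: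
the sum over `(p, m-p)`-shuffles is written as a sum over nonempty subsets `S`,
and the corestriction of `Q̃ ∘ U` as a sum over partitions of `{0, …, m-1}`
(with ordered blocks, whence the factor `1/p!`), encoded by surjections
`π : Fin m → Fin p`. -/
structure InfMorphism (A B : FilteredSLie k) where
  U' : ∀ m : ℕ, MultilinearMap k (fun _ : Fin m => A.L) B.L
  U'_zero : U' 0 = 0
  U'_deg : ∀ (m : ℕ) (d : Fin m → ℤ) (v : Fin m → A.L), (∀ i, v i ∈ A.deg (d i)) →
      U' m v ∈ B.deg (∑ i, d i)
  U'_symm : ∀ (m : ℕ) (d : Fin m → ℤ) (v : Fin m → A.L), (∀ i, v i ∈ A.deg (d i)) →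
      ∀ σ : Equiv.Perm (Fin m), U' m (v ∘ σ) = ((koszulSign d σ : ℤˣ) : ℤ) • U' m v
  U'_filt : ∀ (m : ℕ) (ι : Fin m → ℕ) (v : Fin m → A.L), (∀ i, v i ∈ A.F (ι i)) →
      U' m v ∈ B.F (∑ i, ι i)
  compat : ∀ (m : ℕ), 1 ≤ m → ∀ (d : Fin m → ℤ) (v : Fin m → A.L),
      (∀ i, v i ∈ A.deg (d i)) →
      (∑ S ∈ Finset.univ.filter (fun S : Finset (Fin m) => S.Nonempty),
        ((koszulSign d (moveFrontPerm S) : ℤˣ) : ℤ) •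
          U' (m - S.card + 1)
            (Fin.cons (A.Qarg S.card fun j => v (moveFrontPerm S (frontIdx S j)))
              (fun j => v (moveFrontPerm S (backIdx S j)))))
      =
      ∑ p ∈ Finset.Icc 1 m,
        ((p.factorial : k)⁻¹) •
          ∑ π ∈ Finset.univ.filter (fun π : Fin m → Fin p => Function.Surjective π),
            ((koszulSign d (sortByBlocks π) : ℤˣ) : ℤ) •
              B.Qarg p (fun i =>
                U' (blockFiber π i).card
                  (fun j => v (((blockFiber π i).orderIsoOfFin rfl j : Fin m))))

namespace InfMorphism

variable {k : Type} [Field k] [CharZero k] {A B : FilteredSLie k}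

/-- The linear term `φ` of an `∞`-morphism. -/
def lin (U : InfMorphism k A B) (x : A.L) : B.L := U.U' 1 (fun _ => x)

/-- Partial sums of `U_*(α) = Σ_{m ≥ 1} (1/m!) U'(α^m)`. -/
def pushPartial (U : InfMorphism k A B) (α : A.L) (M : ℕ) : B.L :=
  ∑ m ∈ Finset.range (M + 1), ((m.factorial : k)⁻¹) • U.U' m (fun _ => α)

/-- `U.IsPush α β` : `β = U_*(α)`. -/
def IsPush (U : InfMorphism k A B) (α : A.L) (β : B.L) : Prop :=
  B.IsLim (U.pushPartial α) β

/-- The `j`-th coefficient of `U'` applied to power series (Cauchy product). -/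
def coeffU (U : InfMorphism k A B) (m : ℕ) (c : Fin m → (ℕ → A.L)) (j : ℕ) : B.L :=
  ∑ f ∈ Finset.univ.filter (fun f : Fin m → Fin (j + 1) => ∑ i, ((f i : ℕ)) = j),
    U.U' m (fun i => c i (f i))

/-- `U.IsPushCell c c'` : the `1`-cell `c'` of `MC_•(B)` is the image
`(U ⊗̂ Ω₁)_* c` of the `1`-cell `c` of `MC_•(A)`. -/
def IsPushCell (U : InfMorphism k A B) (c : OneCell A) (c' : OneCell B) : Prop :=
  (∀ j, B.IsLim (fun M => ∑ m ∈ Finset.range (M + 1),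
      ((m.factorial : k)⁻¹) • U.coeffU m (fun _ => c.b0) j) (c'.b0 j)) ∧
  (∀ j, B.IsLim (fun M => ∑ m ∈ Finset.range (M + 1),
      ((m.factorial : k)⁻¹) •
        U.coeffU (m + 1) (fun i : Fin (m + 1) => if (i : ℕ) < m then c.b0 else c.b1) j)
      (c'.b1 j))

end InfMorphism

/-- The linear term `φ` of `U` restricts to a quasi-isomorphism of cochain complexes
`F_n A → F_n B`:  `φ` induces a surjection and an injection on the cohomology of the
subcomplexes `F_n` (in every internal degree `d`). -/
def IsQuasiIsoOnF {k : Type} [Field k] [CharZero k] {A B : FilteredSLie k}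
    (U : InfMorphism k A B) (n : ℕ) : Prop :=
  (∀ (d : ℤ) (x : B.L), x ∈ B.F n → x ∈ B.deg d → B.diff x = 0 →
      ∃ y z, y ∈ A.F n ∧ y ∈ A.deg d ∧ A.diff y = 0 ∧
        z ∈ B.F n ∧ z ∈ B.deg (d - 1) ∧ U.lin y - x = B.diff z) ∧
  (∀ (d : ℤ) (y : A.L), y ∈ A.F n → y ∈ A.deg d → A.diff y = 0 →
      (∃ z, z ∈ B.F n ∧ z ∈ B.deg (d - 1) ∧ U.lin y = B.diff z) →
      ∃ w, w ∈ A.F n ∧ w ∈ A.deg (d - 1) ∧ y = A.diff w)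

/-- The linear term `φ` of `U` induces a quasi-isomorphism of the associated graded
quotient complexes `F_n A / F_{n+1} A → F_n B / F_{n+1} B`. -/
def IsQuasiIsoOnGr {k : Type} [Field k] [CharZero k] {A B : FilteredSLie k}
    (U : InfMorphism k A B) (n : ℕ) : Prop :=
  (∀ (d : ℤ) (x : B.L), x ∈ B.F n → x ∈ B.deg d → B.diff x ∈ B.F (n + 1) →
      ∃ y z, y ∈ A.F n ∧ y ∈ A.deg d ∧ A.diff y ∈ A.F (n + 1) ∧
        z ∈ B.F n ∧ z ∈ B.deg (d - 1) ∧ U.lin y - x - B.diff z ∈ B.F (n + 1)) ∧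
  (∀ (d : ℤ) (y : A.L), y ∈ A.F n → y ∈ A.deg d → A.diff y ∈ A.F (n + 1) →
      (∃ z, z ∈ B.F n ∧ z ∈ B.deg (d - 1) ∧ U.lin y - B.diff z ∈ B.F (n + 1)) →
      ∃ w, w ∈ A.F n ∧ w ∈ A.deg (d - 1) ∧ y - A.diff w ∈ A.F (n + 1))

/-!
Since `α' - α ∈ F_n` and every bracket and every higher component of `U` raises the filtration
degree, `∂(α' - α) ≡ 0` and `U_*(α') - U_*(α) ≡ φ(α' - α)` modulo `F_{n+1}`. For a rectified
`1`-cell with `β̃₁ ∈ F_n` the flow equation forces `β̃₀(t₀) ≡ β̃₀(0) + t₀ ∂β̃₁`, so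
`φ(α' - α) ≡ ∂β̃₁`: the class of `α' - α` in the cohomology of `F_n / F_{n+1}` is killed by `φ`.
Injectivity of `φ` on that cohomology provides `ρ₁`, and surjectivity adjusts it by a cocycle so
that `β̃₁ - φ(ρ₁)` becomes exact modulo `F_{n+1}`.
-/

section FilteredMultilinear

variable {R M N : Type*} [CommRing R] [AddCommGroup M] [Module R M] [AddCommGroup N] [Module R N]

/-- Expanding `T (x + d, …, x + d)` multilinearly, every term other than `T (x, …, x)` has
some argument `d ∈ F n` and all others in `F 1`. -/
theorem MultilinearMap.map_const_sub_map_const_mem {m n : ℕ} {FM : ℕ → Submodule R M}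
    {FN : ℕ → Submodule R N} (hFM : FM 1 = ⊤)
    (T : MultilinearMap R (fun _ : Fin m => M) N)
    (hT : ∀ (ι : Fin m → ℕ) (v : Fin m → M), (∀ i, v i ∈ FM (ι i)) → T v ∈ FN (∑ i, ι i))
    {x y : M} (h : y - x ∈ FM n) :
    T (fun _ => y) - T (fun _ => x) ∈ FN (n + m - 1) := by
  classical
  have hexp : T (fun _ => y) =
      ∑ s : Finset (Fin m), T (s.piecewise (fun _ => y - x) fun _ => x) := by
    rw [← T.map_add_univ]
    congr 1
    funext i
    simp
  rw [hexp, ← Finset.add_sum_erase _ _ (Finset.mem_univ ∅), Finset.piecewise_empty,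
    add_sub_cancel_left]
  refine Submodule.sum_mem _ fun s hs => ?_
  obtain ⟨i, hi⟩ := Finset.nonempty_iff_ne_empty.2 (Finset.ne_of_mem_erase hs)
  have hmem := hT (Function.update (fun _ => 1) i n) (s.piecewise (fun _ => y - x) fun _ => x)
    fun j => by
    rcases eq_or_ne j i with rfl | hji
    · simpa [Finset.piecewise_eq_of_mem _ _ _ hi] using h
    · simp [Function.update_of_ne hji, hFM]
  have hsum : ∑ j, Function.update (fun _ : Fin m => 1) i n j = n + m - 1 := by
    rw [Finset.sum_update_of_mem (Finset.mem_univ i)]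
    simp only [Finset.sum_const, Finset.card_sdiff, Finset.card_univ, Fintype.card_fin,
      Finset.inter_univ, Finset.card_singleton, smul_eq_mul, mul_one]
    have := i.pos
    omega
  rwa [hsum] at hmem

end FilteredMultilinear

namespace FilteredSLie

variable {k : Type} [Field k] {A : FilteredSLie k}

theorem IsLim.sub {a b : ℕ → A.L} {x y : A.L} (ha : A.IsLim a x) (hb : A.IsLim b y) :
    A.IsLim (a - b) (x - y) := fun n => by
  obtain ⟨N₁, h₁⟩ := ha n
  obtain ⟨N₂, h₂⟩ := hb n
  refine ⟨max N₁ N₂, fun M hM => ?_⟩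
  have := sub_mem (h₁ M (le_of_max_le_left hM)) (h₂ M (le_of_max_le_right hM))
  rwa [sub_sub_sub_comm] at this

theorem IsLim.sub_mem_of_eventually {a : ℕ → A.L} {x y : A.L} {n N₀ : ℕ} (h : A.IsLim a x)
    (ha : ∀ M ≥ N₀, a M - y ∈ A.F n) : x - y ∈ A.F n := by
  obtain ⟨N, hN⟩ := h n
  have := add_mem (hN (max N N₀) (le_max_left _ _)) (ha (max N N₀) (le_max_right _ _))
  rwa [sub_add_sub_cancel] at this

theorem br_const_sub_mem {n : ℕ} {x y : A.L} (h : y - x ∈ A.F n) (m : ℕ) :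
    A.br m (fun _ => y) - A.br m (fun _ => x) ∈ A.F (n + 1) := by
  rcases lt_or_ge m 2 with hm | hm
  · simp [A.br_low m hm]
  · exact A.F_anti (by omega)
      ((A.br m).map_const_sub_map_const_mem A.F_one (A.F_br m) h)

theorem IsCurv.diff_sub_mem {n : ℕ} {α α' c c' : A.L} (hc : A.IsCurv α c) (hc' : A.IsCurv α' c')
    (h : α' - α ∈ A.F n) : c' - c - A.diff (α' - α) ∈ A.F (n + 1) := by
  refine (hc'.sub hc).sub_mem_of_eventually (N₀ := 0) fun M _ => ?_
  have hsum : A.curvPartial α' M - A.curvPartial α M - A.diff (α' - α) =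
      ∑ m ∈ Finset.range (M + 1),
        ((m.factorial : k)⁻¹) • (A.br m (fun _ => α') - A.br m (fun _ => α)) := by
    simp only [curvPartial, map_sub, smul_sub, Finset.sum_sub_distrib]
    abel
  rw [Pi.sub_apply, hsum]
  exact Submodule.sum_mem _ fun m _ => Submodule.smul_mem _ _ (br_const_sub_mem h m)

theorem br_succ_mem_of_last_mem {m n : ℕ} {v : Fin (m + 1) → A.L} (h : v (Fin.last m) ∈ A.F n) :
    A.br (m + 1) v ∈ A.F (n + 1) := by
  rcases Nat.eq_zero_or_pos m with rfl | hm
  · simp [A.br_low 1 (by omega)]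
  have hmem := A.F_br (m + 1) (Fin.snoc (fun _ => 1) n) v fun i => by
    refine Fin.lastCases ?_ (fun j => ?_) i
    · simpa using h
    · simp [A.F_one]
  refine A.F_anti ?_ hmem
  simp only [Fin.sum_univ_castSucc, Fin.snoc_castSucc, Fin.snoc_last, Finset.sum_const,
    Finset.card_univ, Fintype.card_fin, smul_eq_mul, mul_one]
  omega

/-- The bracket terms of `∂^{β₀} β₁` all contain a factor of `β₁`, and at least one more. -/
theorem coeffFlowPartial_sub_diff_mem {n : ℕ} {b0 b1 : ℕ → A.L} (hb1 : ∀ j, b1 j ∈ A.F n)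
    (j M : ℕ) : A.coeffFlowPartial b0 b1 j M - A.diff (b1 j) ∈ A.F (n + 1) := by
  rw [coeffFlowPartial, add_sub_cancel_left]
  refine Submodule.sum_mem _ fun m _ => Submodule.smul_mem _ _ <|
    Submodule.sum_mem _ fun f _ => br_succ_mem_of_last_mem ?_
  simpa using hb1 _

end FilteredSLie

theorem koszulSign_fin_one (d : Fin 1 → ℤ) (σ : Equiv.Perm (Fin 1)) : koszulSign d σ = 1 := by
  refine Finset.prod_eq_one fun p hp => absurd (Finset.mem_filter.1 hp).2.1 ?_
  rw [Subsingleton.elim p.1 p.2]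
  exact lt_irrefl _

namespace InfMorphism

variable {k : Type} [Field k] [CharZero k] {A B : FilteredSLie k} (U : InfMorphism k A B)

theorem lin_eq_toLinearMap (x : A.L) : U.lin x = (U.U' 1).toLinearMap 0 0 x := by
  simp only [lin, MultilinearMap.toLinearMap_apply, Function.update_eq_const_of_subsingleton]
  rfl

theorem lin_add (x y : A.L) : U.lin (x + y) = U.lin x + U.lin y := by
  simp only [lin_eq_toLinearMap, map_add]

theorem lin_sub (x y : A.L) : U.lin (x - y) = U.lin x - U.lin y := by
  simp only [lin_eq_toLinearMap, map_sub]

theorem lin_mem_F {n : ℕ} {x : A.L} (hx : x ∈ A.F n) : U.lin x ∈ B.F n := by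
  simpa [lin] using U.U'_filt 1 (fun _ => n) (fun _ => x) fun _ => hx

theorem lin_mem_deg {d : ℤ} {x : A.L} (hx : x ∈ A.deg d) : U.lin x ∈ B.deg d := by
  simpa [lin] using U.U'_deg 1 (fun _ => d) (fun _ => x) fun _ => hx

/-- The arity-one component of `U ∘ Q = Q̃ ∘ U`. -/
theorem lin_diff {d : ℤ} {x : A.L} (hx : x ∈ A.deg d) : U.lin (A.diff x) = B.diff (U.lin x) := by
  have h := U.compat 1 le_rfl (fun _ => d) (fun _ => x) fun _ => hx
  have hS : Finset.univ.filter (fun S : Finset (Fin 1) => S.Nonempty) = {{0}} := by decide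
  have hπ : Finset.univ.filter (fun π : Fin 1 → Fin 1 => Function.Surjective π) =
      {fun _ => 0} := by
    decide
  rw [hS, Finset.Icc_self, Finset.sum_singleton, Finset.sum_singleton, hπ, Finset.sum_singleton,
    koszulSign_fin_one, koszulSign_fin_one] at h
  simp only [Units.val_one, one_smul, Nat.factorial_one, Nat.cast_one, inv_one,
    FilteredSLie.Qarg, reduceDIte] at h
  calc U.lin (A.diff x) = U.U' 1 (Fin.cons (A.diff x) fun _ : Fin 0 => x) := by
        show U.U' 1 _ = _
        congr 1
        funext i
        rw [Subsingleton.elim i 0]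
        rfl
    _ = B.diff (U.lin x) := h

variable {U} in
theorem IsPush.sub_sub_lin_mem {n : ℕ} {α α' : A.L} {Uα Uα' : B.L} (h : U.IsPush α Uα)
    (h' : U.IsPush α' Uα') (hα : α' - α ∈ A.F n) :
    Uα' - Uα - U.lin (α' - α) ∈ B.F (n + 1) := by
  refine (h'.sub h).sub_mem_of_eventually (N₀ := 1) fun M hM => ?_
  have hsplit : U.pushPartial α' M - U.pushPartial α M - U.lin (α' - α) =
      ∑ m ∈ (Finset.range (M + 1)).erase 1,
        ((m.factorial : k)⁻¹) • (U.U' m (fun _ => α') - U.U' m (fun _ => α)) := by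
    rw [U.lin_sub, pushPartial, pushPartial, ← Finset.sum_sub_distrib,
      ← Finset.add_sum_erase _ _ (Finset.mem_range.2 (by omega : 1 < M + 1))]
    simp only [Nat.factorial_one, Nat.cast_one, inv_one, one_smul, smul_sub, lin]
    abel
  rw [Pi.sub_apply, hsplit]
  refine Submodule.sum_mem _ fun m hm => Submodule.smul_mem _ _ ?_
  rcases Nat.eq_zero_or_pos m with rfl | hm0
  · simp [U.U'_zero]
  · exact B.F_anti (by have := Finset.ne_of_mem_erase hm; omega)
      ((U.U' m).map_const_sub_map_const_mem A.F_one (U.U'_filt m) hα)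

end InfMorphism

namespace OneCell

variable {k : Type} [Field k] [CharZero k] {B : FilteredSLie k} (c : OneCell B)

theorem succ_nsmul_b0_sub_diff_mem {n : ℕ} (hb1 : ∀ j, c.b1 j ∈ B.F n) (j : ℕ) :
    (j + 1) • c.b0 (j + 1) - B.diff (c.b1 j) ∈ B.F (n + 1) :=
  (c.flow j).sub_mem_of_eventually (N₀ := 0) fun M _ =>
    FilteredSLie.coeffFlowPartial_sub_diff_mem hb1 j M

namespace Rectified

variable {c} {n : ℕ} (hc : c.Rectified) (hc1 : c.b1 0 ∈ B.F n)
include hc hc1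

theorem b1_mem (j : ℕ) : c.b1 j ∈ B.F n := by
  rcases Nat.eq_zero_or_pos j with rfl | hj
  · exact hc1
  · simp [hc j hj]

theorem b0_one_sub_diff_mem : c.b0 1 - B.diff (c.b1 0) ∈ B.F (n + 1) := by
  simpa using c.succ_nsmul_b0_sub_diff_mem (hc.b1_mem hc1) 0

theorem b0_add_two_mem (j : ℕ) : c.b0 (j + 2) ∈ B.F (n + 1) := by
  have h := c.succ_nsmul_b0_sub_diff_mem (hc.b1_mem hc1) (j + 1)
  rw [hc (j + 1) (by omega), map_zero, sub_zero, ← Nat.cast_smul_eq_nsmul k] at h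
  exact (Submodule.smul_mem_iff _ (Nat.cast_ne_zero.2 (by omega))).1 h

theorem sub_sub_diff_mem_of_connects {x y : B.L} (hxy : c.Connects x y) :
    y - x - B.diff (c.b1 0) ∈ B.F (n + 1) := by
  rw [sub_sub]
  refine hxy.2.sub_mem_of_eventually (N₀ := 1) fun M hM => ?_
  obtain ⟨M, rfl⟩ := Nat.exists_eq_add_of_le' hM
  rw [Finset.sum_range_succ', Finset.sum_range_succ', hxy.1]
  have := add_mem
    (Submodule.sum_mem (t := Finset.range M) _ fun j _ => hc.b0_add_two_mem hc1 j)
    (hc.b0_one_sub_diff_mem hc1)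
  convert this using 1
  abel

end Rectified

end OneCell

/-- Injectivity on cohomology gives a primitive `w` of `y`; surjectivity then corrects `w` by a
cocycle so that `φ` of the primitive matches `x` up to `∂γ`. -/
theorem IsQuasiIsoOnGr.exists_compatible_primitive {k : Type} [Field k] [CharZero k]
    {A B : FilteredSLie k} {U : InfMorphism k A B} {n : ℕ} (hU : IsQuasiIsoOnGr U n) {d : ℤ}
    {y : A.L} {x : B.L} (hyF : y ∈ A.F n) (hyd : y ∈ A.deg d) (hdy : A.diff y ∈ A.F (n + 1))
    (hxF : x ∈ B.F n) (hxd : x ∈ B.deg (d - 1)) (hyx : U.lin y - B.diff x ∈ B.F (n + 1)) :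
    ∃ ρ γ, ρ ∈ A.deg (d - 1) ∧ ρ ∈ A.F n ∧ γ ∈ B.deg (d - 1 - 1) ∧ γ ∈ B.F n ∧
      y - A.diff ρ ∈ A.F (n + 1) ∧ x - U.lin ρ - B.diff γ ∈ B.F (n + 1) := by
  obtain ⟨w, hwF, hwd, hyw⟩ := hU.2 d y hyF hyd hdy ⟨x, hxF, hxd, hyx⟩
  have hdx : B.diff (x - U.lin w) ∈ B.F (n + 1) := by
    have h := sub_mem (U.lin_mem_F hyw) hyx
    rwa [U.lin_sub, U.lin_diff hwd, sub_sub_sub_cancel_left, ← map_sub] at h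
  obtain ⟨z, γ, hzF, hzd, hdz, hγF, hγd, hzγ⟩ :=
    hU.1 (d - 1) (x - U.lin w) (sub_mem hxF (U.lin_mem_F hwF))
      (sub_mem hxd (U.lin_mem_deg hwd)) hdx
  refine ⟨w + z, -γ, add_mem hwd hzd, add_mem hwF hzF, neg_mem hγd, neg_mem hγF, ?_, ?_⟩
  · simpa [map_add, sub_add_eq_sub_sub] using sub_mem hyw hdz
  · convert neg_mem hzγ using 1
    rw [U.lin_add, map_neg]
    abel

theorem coboundary_with_compatible_homotopy_general
    {k : Type} [Field k] [CharZero k] {A B : FilteredSLie k}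
    (U : InfMorphism k A B) (n : ℕ)
    (hqis : IsQuasiIsoOnGr U n)
    (α α' : A.L) (hα : A.IsMC α) (hα' : A.IsMC α')
    (hdiff : α' - α ∈ A.F n)
    (Uα Uα' : B.L) (hUα : U.IsPush α Uα) (hUα' : U.IsPush α' Uα')
    (c : OneCell B) (hrect : c.Rectified) (hc1 : c.b1 0 ∈ B.F n)
    (hc : c.Connects Uα Uα') :
    ∃ (ρ₁ : A.L) (γt : B.L),
      ρ₁ ∈ A.deg (-1) ∧ ρ₁ ∈ A.F n ∧
      γt ∈ B.deg (-2) ∧ γt ∈ B.F n ∧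
      α' - α - A.diff ρ₁ ∈ A.F (n + 1) ∧
      c.b1 0 - U.lin ρ₁ - B.diff γt ∈ B.F (n + 1) := by
  have hclosed : A.diff (α' - α) ∈ A.F (n + 1) := by
    simpa using neg_mem (hα.2.diff_sub_mem hα'.2 hdiff)
  have hlin : U.lin (α' - α) - B.diff (c.b1 0) ∈ B.F (n + 1) := by
    have h := sub_mem (hrect.sub_sub_diff_mem_of_connects hc1 hc) (hUα.sub_sub_lin_mem hUα' hdiff)
    rwa [sub_sub_sub_cancel_left] at h
  obtain ⟨ρ, γ, hρd, hρF, hγd, hγF, hρ, hγ⟩ := hqis.exists_compatible_primitive hdiff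
    (sub_mem hα'.1 hα.1) hclosed hc1 (by simpa using c.b1_deg 0) hlin
  exact ⟨ρ, γ, by simpa using hρd, hρF, by simpa using hγd, hγF, hρ, hγ⟩

theorem coboundary_with_compatible_homotopy
    {k : Type} [Field k] [CharZero k] {A B : FilteredSLie k}
    (U : InfMorphism k A B) (n : ℕ) (hn : 1 ≤ n)
    (hqis : IsQuasiIsoOnGr U n)
    (α α' : A.L) (hα : A.IsMC α) (hα' : A.IsMC α')
    (hdiff : α' - α ∈ A.F n)
    (Uα Uα' : B.L) (hUα : U.IsPush α Uα) (hUα' : U.IsPush α' Uα')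
    (c : OneCell B) (hrect : c.Rectified) (hc1 : c.b1 0 ∈ B.F n)
    (hc : c.Connects Uα Uα') :
    ∃ (ρ₁ : A.L) (γt : B.L),
      ρ₁ ∈ A.deg (-1) ∧ ρ₁ ∈ A.F n ∧
      γt ∈ B.deg (-2) ∧ γt ∈ B.F n ∧
      α' - α - A.diff ρ₁ ∈ A.F (n + 1) ∧
      c.b1 0 - U.lin ρ₁ - B.diff γt ∈ B.F (n + 1) :=
  coboundary_with_compatible_homotopy_general U n hqis α α' hα hα' hdiff Uα Uα' hUα hUα' c hrect hc1
    hc
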